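/- arXiv:0910.0137 — 6 statements merged into one kernel-verified Lean document; each statement's English description precedes it below -/
import Mathlib

section
/- Under the affine property and the Chapman–Kolmogorov equations, the exponents satisfy the semiflow equations: for all s,t ≥ 0 and all u ∈ S_d^+, φ(t+s,u) = φ(t,u) + φ(s,ψ(t,u)) and ψ(t+s,u) = ψ(s,ψ(t,u)). -/
open MeasureTheory

noncomputable instance matrixMeasurableSpace (d : ℕ) :
    MeasurableSpace (Matrix (Fin d) (Fin d) ℝ) := borel _

instance matrixBorelSpace (d : ℕ) : BorelSpace (Matrix (Fin d) (Fin d) ℝ) := ⟨rfl⟩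

/-!
Integrating `e^{-⟨u,ξ⟩}` against `p_{s+t}(x,·) = ∫ p_t(η,·) p_s(x,dη)` and applying the affine
property twice gives `e^{-φ(s+t,u) - ⟨ψ(s+t,u),x⟩} = e^{-φ(t,u) - φ(s,ψ(t,u)) - ⟨ψ(s,ψ(t,u)),x⟩}`
for every `x ∈ S_d^+`. Taking `x = 0` identifies the constant terms; the linear terms then
agree on the cone `S_d^+`, which determines a symmetric matrix since the rank-one matrices
`v vᵀ` lie in it and `⟨C, v vᵀ⟩ = vᵀ C v`.
-/

open scoped ComplexOrder ENNReal

theorem MeasureTheory.Measure.eq_bind_of_apply_subset_eq_lintegral {α : Type*} [MeasurableSpace α]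
    {S : Set α} (hS : MeasurableSet S) {μ ν : Measure α} {κ : α → Measure α}
    (hκ : Measurable κ) (hν : ν Sᶜ = 0) (hκS : ∀ᵐ y ∂μ, κ y Sᶜ = 0)
    (h : ∀ A, MeasurableSet A → A ⊆ S → ν A = ∫⁻ y, κ y A ∂μ) : ν = μ.bind κ := by
  ext A hA
  rw [bind_apply hA hκ.aemeasurable, ← measure_inter_conull hν,
    h _ (hA.inter hS) Set.inter_subset_right]
  refine lintegral_congr_ae ?_
  filter_upwards [hκS] with y hy using measure_inter_conull hy

namespace Matrix

variable {n 𝕜 : Type*} [Fintype n] [RCLike 𝕜]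

theorem isClosed_setOf_posSemidef : IsClosed {A : Matrix n n 𝕜 | A.PosSemidef} := by
  simp only [posSemidef_iff_dotProduct_mulVec, Set.ofPred_and, Set.ofPred_forall]
  refine .inter (isClosed_eq (by fun_prop) continuous_id)
    (isClosed_iInter fun v => isClosed_le continuous_const (by fun_prop))

open scoped MatrixOrder in
theorem IsHermitian.eq_of_forall_trace_mul_posSemidef_eq {B B' : Matrix n n 𝕜}
    (hB : B.IsHermitian) (hB' : B'.IsHermitian)
    (h : ∀ x : Matrix n n 𝕜, x.PosSemidef → (B * x).trace = (B' * x).trace) : B = B' := by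
  have hquad : ∀ v : n → 𝕜, star v ⬝ᵥ ((B - B') *ᵥ v) = 0 := fun v => by
    have hv := h _ (posSemidef_vecMulVec_self_star v)
    rwa [← sub_eq_zero, ← trace_sub, ← sub_mul, mul_vecMulVec, trace_vecMulVec,
      dotProduct_comm] at hv
  have hpsd : ∀ {C : Matrix n n 𝕜}, C.IsHermitian → (∀ v : n → 𝕜, star v ⬝ᵥ (C *ᵥ v) = 0) →
      C.PosSemidef := fun hC hC0 =>
    posSemidef_iff_dotProduct_mulVec.mpr ⟨hC, fun v => (hC0 v).ge⟩
  refine le_antisymm (le_iff.mpr (hpsd (hB'.sub hB) fun v => ?_))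
    (le_iff.mpr (hpsd (hB.sub hB') hquad))
  rw [← neg_sub, neg_mulVec, dotProduct_neg, hquad, neg_zero]

theorem IsHermitian.eq_and_eq_of_forall_add_trace_mul_eq {a a' : 𝕜} {B B' : Matrix n n 𝕜}
    (hB : B.IsHermitian) (hB' : B'.IsHermitian)
    (h : ∀ x : Matrix n n 𝕜, x.PosSemidef → a + (B * x).trace = a' + (B' * x).trace) :
    a = a' ∧ B = B' := by
  have ha : a = a' := by simpa using h 0 .zero
  exact ⟨ha, hB.eq_of_forall_trace_mul_posSemidef_eq hB' fun x hx => by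
    simpa [ha] using h x hx⟩

variable [MeasurableSpace (Matrix n n ℝ)]

noncomputable def laplaceTransform (μ : Measure (Matrix n n ℝ)) (u : Matrix n n ℝ) : ℝ≥0∞ :=
  ∫⁻ ξ, ENNReal.ofReal (Real.exp (-(u * ξ).trace)) ∂μ

theorem laplaceTransform_eq_ofReal_exp {μ : Measure (Matrix n n ℝ)} {u : Matrix n n ℝ} {c : ℝ}
    (h : ∫ ξ, Real.exp (-(u * ξ).trace) ∂μ = Real.exp c) :
    laplaceTransform μ u = ENNReal.ofReal (Real.exp c) := by
  -- a non-integrable function has Bochner integral `0 ≠ exp c`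
  have hint : Integrable (fun ξ => Real.exp (-(u * ξ).trace)) μ :=
    .of_integral_ne_zero (h ▸ (Real.exp_pos c).ne')
  rw [laplaceTransform, ← h, ofReal_integral_eq_lintegral_ofReal hint
    (.of_forall fun ξ => (Real.exp_pos _).le)]

variable [OpensMeasurableSpace (Matrix n n ℝ)]

theorem laplaceTransform_bind {μ : Measure (Matrix n n ℝ)}
    {κ : Matrix n n ℝ → Measure (Matrix n n ℝ)} (hκ : Measurable κ) {u v : Matrix n n ℝ} {a : ℝ}
    (h : ∀ᵐ η ∂μ, laplaceTransform (κ η) u = ENNReal.ofReal (Real.exp (-a - (v * η).trace))) :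
    laplaceTransform (μ.bind κ) u = ENNReal.ofReal (Real.exp (-a)) * laplaceTransform μ v := by
  have hmeas (w : Matrix n n ℝ) : Measurable fun ξ => ENNReal.ofReal (Real.exp (-(w * ξ).trace)) :=
    ENNReal.measurable_ofReal.comp
      (by fun_prop : Continuous fun ξ : Matrix n n ℝ => Real.exp (-(w * ξ).trace)).measurable
  rw [laplaceTransform, Measure.lintegral_bind hκ.aemeasurable (hmeas u).aemeasurable,
    laplaceTransform, ← lintegral_const_mul _ (hmeas v)]
  refine lintegral_congr_ae ?_
  filter_upwards [h] with η hη
  rw [← laplaceTransform, hη, ← ENNReal.ofReal_mul (Real.exp_pos _).le, ← Real.exp_add,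
    sub_eq_add_neg]

end Matrix

theorem affine_exponents_semiflow_general {d : ℕ}
    (p : ℝ → Matrix (Fin d) (Fin d) ℝ → Measure (Matrix (Fin d) (Fin d) ℝ))
    (φ : ℝ → Matrix (Fin d) (Fin d) ℝ → ℝ)
    (ψ : ℝ → Matrix (Fin d) (Fin d) ℝ → Matrix (Fin d) (Fin d) ℝ)
    (hmeas : ∀ t : ℝ, 0 ≤ t → ∀ A : Set (Matrix (Fin d) (Fin d) ℝ), MeasurableSet A →
      Measurable (fun ξ => p t ξ A))
    (hsupp : ∀ t : ℝ, 0 ≤ t → ∀ x : Matrix (Fin d) (Fin d) ℝ, x.PosSemidef →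
      p t x {ξ : Matrix (Fin d) (Fin d) ℝ | ¬ ξ.PosSemidef} = 0)
    (hCK : ∀ s t : ℝ, 0 ≤ s → 0 ≤ t → ∀ x : Matrix (Fin d) (Fin d) ℝ, x.PosSemidef →
      ∀ A : Set (Matrix (Fin d) (Fin d) ℝ), MeasurableSet A →
        A ⊆ {ξ : Matrix (Fin d) (Fin d) ℝ | ξ.PosSemidef} →
        p (t + s) x A = ∫⁻ ξ, p s ξ A ∂(p t x))
    (hψ : ∀ t : ℝ, 0 ≤ t → ∀ u : Matrix (Fin d) (Fin d) ℝ, u.PosSemidef →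
      (ψ t u).PosSemidef)
    (haff : ∀ t : ℝ, 0 ≤ t → ∀ u x : Matrix (Fin d) (Fin d) ℝ,
      u.PosSemidef → x.PosSemidef →
      ∫ ξ, Real.exp (-(u * ξ).trace) ∂(p t x)
        = Real.exp (-(φ t u) - ((ψ t u) * x).trace)) :
    ∀ s t : ℝ, 0 ≤ s → 0 ≤ t → ∀ u : Matrix (Fin d) (Fin d) ℝ, u.PosSemidef →
      φ (t + s) u = φ t u + φ s (ψ t u) ∧ ψ (t + s) u = ψ s (ψ t u) := by
  intro s t hs ht u hu
  rw [add_comm t s]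
  have hae : ∀ r, 0 ≤ r → ∀ x : Matrix (Fin d) (Fin d) ℝ, x.PosSemidef →
      ∀ᵐ ξ ∂(p r x), ξ.PosSemidef := fun r hr x hx => ae_iff.mpr (hsupp r hr x hx)
  have hlaplace : ∀ r, 0 ≤ r → ∀ v x : Matrix (Fin d) (Fin d) ℝ, v.PosSemidef → x.PosSemidef →
      Matrix.laplaceTransform (p r x) v
        = ENNReal.ofReal (Real.exp (-(φ r v) - (ψ r v * x).trace)) :=
    fun r hr v x hv hx => Matrix.laplaceTransform_eq_ofReal_exp (haff r hr v x hv hx)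
  have hκ : Measurable (p t) := Measure.measurable_of_measurable_coe _ (hmeas t ht)
  have hexponents : ∀ x : Matrix (Fin d) (Fin d) ℝ, x.PosSemidef →
      φ (s + t) u + (ψ (s + t) u * x).trace
        = (φ t u + φ s (ψ t u)) + (ψ s (ψ t u) * x).trace := by
    intro x hx
    have hbind : p (s + t) x = (p s x).bind (p t) :=
      Measure.eq_bind_of_apply_subset_eq_lintegral Matrix.isClosed_setOf_posSemidef.measurableSet
        hκ (hsupp _ (by positivity) x hx) ((hae s hs x hx).mono fun η hη => hsupp t ht η hη)
        (hCK t s ht hs x hx)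
    have h := calc ENNReal.ofReal (Real.exp (-(φ (s + t) u) - (ψ (s + t) u * x).trace))
        = Matrix.laplaceTransform (p (s + t) x) u := (hlaplace _ (by positivity) u x hu hx).symm
      _ = ENNReal.ofReal (Real.exp (-φ t u)) * Matrix.laplaceTransform (p s x) (ψ t u) := by
          rw [hbind]
          exact Matrix.laplaceTransform_bind hκ ((hae s hs x hx).mono fun η hη =>
            hlaplace t ht u η hu hη)
      _ = ENNReal.ofReal (Real.exp (-(φ t u + φ s (ψ t u)) - (ψ s (ψ t u) * x).trace)) := by
          rw [hlaplace s hs _ x (hψ t ht u hu) hx, ← ENNReal.ofReal_mul (Real.exp_pos _).le,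
            ← Real.exp_add]
          ring_nf
    rw [ENNReal.ofReal_eq_ofReal_iff (Real.exp_pos _).le (Real.exp_pos _).le,
      Real.exp_eq_exp] at h
    linarith
  exact (hψ _ (by positivity) u hu).isHermitian.eq_and_eq_of_forall_add_trace_mul_eq
    (hψ s hs _ (hψ t ht u hu)).isHermitian hexponents

/-- Let `(p_t)_{t≥0}` be a family of sub-Markovian Borel transition
kernels on the cone `S_d^+` of positive semidefinite matrices (modelled as measures on
the space of `d×d` real matrices, supported on `S_d^+`, of total mass `≤ 1`), satisfying
the Chapman–Kolmogorov equations.  Suppose the affine property holds: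
`∫ e^{−⟨u,ξ⟩} p_t(x,dξ) = e^{−φ(t,u) − ⟨ψ(t,u),x⟩}` for all `t ≥ 0` and `u, x ∈ S_d^+`,
where `φ ≥ 0` and `ψ` takes values in `S_d^+` and `⟨a,b⟩ = tr(ab)`.  Then the exponents
satisfy the semiflow equations
`φ(t+s,u) = φ(t,u) + φ(s,ψ(t,u))` and `ψ(t+s,u) = ψ(s,ψ(t,u))`. -/
theorem affine_exponents_semiflow {d : ℕ}
    (p : ℝ → Matrix (Fin d) (Fin d) ℝ → Measure (Matrix (Fin d) (Fin d) ℝ))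
    (φ : ℝ → Matrix (Fin d) (Fin d) ℝ → ℝ)
    (ψ : ℝ → Matrix (Fin d) (Fin d) ℝ → Matrix (Fin d) (Fin d) ℝ)
    (hmeas : ∀ t : ℝ, 0 ≤ t → ∀ A : Set (Matrix (Fin d) (Fin d) ℝ), MeasurableSet A →
      Measurable (fun ξ => p t ξ A))
    (hsupp : ∀ t : ℝ, 0 ≤ t → ∀ x : Matrix (Fin d) (Fin d) ℝ, x.PosSemidef →
      p t x {ξ : Matrix (Fin d) (Fin d) ℝ | ¬ ξ.PosSemidef} = 0)
    (hsub : ∀ t : ℝ, 0 ≤ t → ∀ x : Matrix (Fin d) (Fin d) ℝ, x.PosSemidef →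
      p t x Set.univ ≤ 1)
    (hCK : ∀ s t : ℝ, 0 ≤ s → 0 ≤ t → ∀ x : Matrix (Fin d) (Fin d) ℝ, x.PosSemidef →
      ∀ A : Set (Matrix (Fin d) (Fin d) ℝ), MeasurableSet A →
        A ⊆ {ξ : Matrix (Fin d) (Fin d) ℝ | ξ.PosSemidef} →
        p (t + s) x A = ∫⁻ ξ, p s ξ A ∂(p t x))
    (hφ : ∀ t : ℝ, 0 ≤ t → ∀ u : Matrix (Fin d) (Fin d) ℝ, u.PosSemidef → 0 ≤ φ t u)
    (hψ : ∀ t : ℝ, 0 ≤ t → ∀ u : Matrix (Fin d) (Fin d) ℝ, u.PosSemidef →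
      (ψ t u).PosSemidef)
    (haff : ∀ t : ℝ, 0 ≤ t → ∀ u x : Matrix (Fin d) (Fin d) ℝ,
      u.PosSemidef → x.PosSemidef →
      ∫ ξ, Real.exp (-(u * ξ).trace) ∂(p t x)
        = Real.exp (-(φ t u) - ((ψ t u) * x).trace)) :
    ∀ s t : ℝ, 0 ≤ s → 0 ≤ t → ∀ u : Matrix (Fin d) (Fin d) ℝ, u.PosSemidef →
      φ (t + s) u = φ t u + φ s (ψ t u) ∧ ψ (t + s) u = ψ s (ψ t u) :=
  affine_exponents_semiflow_general p φ ψ hmeas hsupp hCK hψ haff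
end

section
/- Under the affine property and the Chapman–Kolmogorov equations, the exponents are order preserving: for all u,v ∈ S_d^+ with v ⪯ u and all t ≥ 0, one has φ(t,v) ≤ φ(t,u) and ψ(t,v) ⪯ ψ(t,u). -/
open MeasureTheory

/-!
If `v ⪯ u` and `ξ ⪰ 0` then `tr(vξ) ≤ tr(uξ)`, so integrating `e^{-tr(uξ)} ≤ e^{-tr(vξ)}`
against `p_t(x, ·)` and using the affine property gives
`φ(t,v) + ⟨ψ(t,v),x⟩ ≤ φ(t,u) + ⟨ψ(t,u),x⟩` for every `x ⪰ 0`. At `x = 0` this is the claim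
for `φ`. Replacing `x` by `s • x` and letting `s → ∞` gives `⟨ψ(t,v),x⟩ ≤ ⟨ψ(t,u),x⟩` on the
cone, and testing against the rank-one matrices `x = y yᵀ` yields `ψ(t,v) ⪯ ψ(t,u)`.
-/

theorem nonneg_of_forall_le_mul {c D : ℝ} (h : ∀ s : ℝ, 0 ≤ s → c ≤ s * D) : 0 ≤ D := by
  by_contra! hD
  have hs := h ((|c| + 1) / -D) (div_nonneg (by positivity) (neg_nonneg.mpr hD.le))
  rw [div_mul_eq_mul_div, div_neg, mul_div_cancel_right₀ _ hD.ne] at hs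
  linarith [neg_abs_le c]

namespace Matrix

variable {n : Type*} [Fintype n]

section RCLike

open scoped ComplexOrder MatrixOrder

variable {𝕜 : Type*} [RCLike 𝕜]

theorem PosSemidef.trace_mul_nonneg {A B : Matrix n n 𝕜} (hA : A.PosSemidef)
    (hB : B.PosSemidef) : 0 ≤ (A * B).trace := by
  classical
  obtain ⟨C, rfl⟩ := CStarAlgebra.nonneg_iff_eq_star_mul_self.mp hB.nonneg
  rw [← Matrix.mul_assoc, trace_mul_comm, ← Matrix.mul_assoc]
  exact (hA.mul_mul_conjTranspose_same C).trace_nonneg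

theorem posSemidef_sub_of_forall_trace_mul_le {A B : Matrix n n 𝕜} (hA : A.IsHermitian)
    (hB : B.IsHermitian) (h : ∀ x : Matrix n n 𝕜, x.PosSemidef → (A * x).trace ≤ (B * x).trace) :
    (B - A).PosSemidef := by
  refine .of_dotProduct_mulVec_nonneg (hB.sub hA) fun y => ?_
  have hy := h _ (posSemidef_vecMulVec_self_star y)
  rw [mul_vecMulVec, mul_vecMulVec, trace_vecMulVec, trace_vecMulVec] at hy
  rw [sub_mulVec, dotProduct_sub, sub_nonneg, dotProduct_comm, dotProduct_comm _ (B *ᵥ y)]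
  exact hy

end RCLike

theorem PosSemidef.trace_mul_le_trace_mul {A B X : Matrix n n ℝ} (hAB : (B - A).PosSemidef)
    (hX : X.PosSemidef) : (A * X).trace ≤ (B * X).trace := by
  simpa [sub_mul, trace_sub] using hAB.trace_mul_nonneg hX

theorem trace_mul_le_of_forall_add_trace_mul_le {a b : ℝ} {A B : Matrix n n ℝ}
    (h : ∀ x : Matrix n n ℝ, x.PosSemidef → a + (A * x).trace ≤ b + (B * x).trace)
    {x : Matrix n n ℝ} (hx : x.PosSemidef) : (A * x).trace ≤ (B * x).trace := by
  refine sub_nonneg.mp (nonneg_of_forall_le_mul (c := a - b) fun s hs => ?_)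
  have hs := h (s • x) (hx.smul hs)
  simp only [Matrix.mul_smul, trace_smul, smul_eq_mul] at hs
  linarith [mul_sub s (B * x).trace (A * x).trace]

end Matrix

section Laplace

variable {n : Type*} [Fintype n] [MeasurableSpace (Matrix n n ℝ)]
  [OpensMeasurableSpace (Matrix n n ℝ)]

theorem integral_exp_neg_trace_mul_le_of_posSemidef_sub (μ : Measure (Matrix n n ℝ))
    [IsFiniteMeasure μ] (hμ : ∀ᵐ ξ ∂μ, ξ.PosSemidef) {u v : Matrix n n ℝ}
    (hv : v.PosSemidef) (huv : (u - v).PosSemidef) :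
    ∫ ξ, Real.exp (-(u * ξ).trace) ∂μ ≤ ∫ ξ, Real.exp (-(v * ξ).trace) ∂μ := by
  have hcont : Continuous fun ξ : Matrix n n ℝ => Real.exp (-(v * ξ).trace) := by fun_prop
  have hint : Integrable (fun ξ => Real.exp (-(v * ξ).trace)) μ := by
    refine .mono' (integrable_const 1) hcont.aestronglyMeasurable (hμ.mono fun ξ hξ => ?_)
    rw [Real.norm_of_nonneg (Real.exp_nonneg _), Real.exp_le_one_iff, neg_nonpos]
    exact hv.trace_mul_nonneg hξ
  refine integral_mono_of_nonneg (.of_forall fun _ => Real.exp_nonneg _) hint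
    (hμ.mono fun ξ hξ => ?_)
  simpa using huv.trace_mul_le_trace_mul hξ

end Laplace

theorem affine_exponents_order_preserving_general {d : ℕ}
    (p : ℝ → Matrix (Fin d) (Fin d) ℝ → Measure (Matrix (Fin d) (Fin d) ℝ))
    (φ : ℝ → Matrix (Fin d) (Fin d) ℝ → ℝ)
    (ψ : ℝ → Matrix (Fin d) (Fin d) ℝ → Matrix (Fin d) (Fin d) ℝ)
    (hsupp : ∀ t : ℝ, 0 ≤ t → ∀ x : Matrix (Fin d) (Fin d) ℝ, x.PosSemidef →
      p t x {ξ : Matrix (Fin d) (Fin d) ℝ | ¬ ξ.PosSemidef} = 0)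
    (hsub : ∀ t : ℝ, 0 ≤ t → ∀ x : Matrix (Fin d) (Fin d) ℝ, x.PosSemidef →
      p t x Set.univ ≤ 1)
    (hψ : ∀ t : ℝ, 0 ≤ t → ∀ u : Matrix (Fin d) (Fin d) ℝ, u.PosSemidef →
      (ψ t u).PosSemidef)
    (haff : ∀ t : ℝ, 0 ≤ t → ∀ u x : Matrix (Fin d) (Fin d) ℝ,
      u.PosSemidef → x.PosSemidef →
      ∫ ξ, Real.exp (-(u * ξ).trace) ∂(p t x)
        = Real.exp (-(φ t u) - ((ψ t u) * x).trace)) :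
    ∀ t : ℝ, 0 ≤ t → ∀ u v : Matrix (Fin d) (Fin d) ℝ,
      u.PosSemidef → v.PosSemidef → (u - v).PosSemidef →
      φ t v ≤ φ t u ∧ (ψ t u - ψ t v).PosSemidef := by
  intro t ht u v hu hv huv
  have key : ∀ x : Matrix (Fin d) (Fin d) ℝ, x.PosSemidef →
      φ t v + (ψ t v * x).trace ≤ φ t u + (ψ t u * x).trace := by
    intro x hx
    have : IsFiniteMeasure (p t x) := ⟨(hsub t ht x hx).trans_lt ENNReal.one_lt_top⟩
    have hle := integral_exp_neg_trace_mul_le_of_posSemidef_sub (p t x)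
      (ae_iff.mpr (hsupp t ht x hx)) hv huv
    rw [haff t ht u x hu hx, haff t ht v x hv hx, Real.exp_le_exp] at hle
    linarith
  refine ⟨by simpa using key 0 .zero, ?_⟩
  exact Matrix.posSemidef_sub_of_forall_trace_mul_le (hψ t ht v hv).isHermitian
    (hψ t ht u hu).isHermitian fun x hx => Matrix.trace_mul_le_of_forall_add_trace_mul_le key hx

/-- Let `(p_t)_{t≥0}` be a family of sub-Markovian Borel transition
kernels on the cone `S_d^+` of positive semidefinite matrices (modelled as measures on
the space of `d×d` real matrices, supported on `S_d^+`, of total mass `≤ 1`), satisfying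
the Chapman–Kolmogorov equations.  Suppose the affine property holds:
`∫ e^{−⟨u,ξ⟩} p_t(x,dξ) = e^{−φ(t,u) − ⟨ψ(t,u),x⟩}` for all `t ≥ 0` and `u, x ∈ S_d^+`,
where `φ ≥ 0` and `ψ` takes values in `S_d^+` and `⟨a,b⟩ = tr(ab)`.  Then the exponents
are order preserving: for `v ⪯ u` (i.e. `u − v` positive semidefinite) and `t ≥ 0`,
one has `φ(t,v) ≤ φ(t,u)` and `ψ(t,v) ⪯ ψ(t,u)`. -/
theorem affine_exponents_order_preserving {d : ℕ}
    (p : ℝ → Matrix (Fin d) (Fin d) ℝ → Measure (Matrix (Fin d) (Fin d) ℝ))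
    (φ : ℝ → Matrix (Fin d) (Fin d) ℝ → ℝ)
    (ψ : ℝ → Matrix (Fin d) (Fin d) ℝ → Matrix (Fin d) (Fin d) ℝ)
    (hmeas : ∀ t : ℝ, 0 ≤ t → ∀ A : Set (Matrix (Fin d) (Fin d) ℝ), MeasurableSet A →
      Measurable (fun ξ => p t ξ A))
    (hsupp : ∀ t : ℝ, 0 ≤ t → ∀ x : Matrix (Fin d) (Fin d) ℝ, x.PosSemidef →
      p t x {ξ : Matrix (Fin d) (Fin d) ℝ | ¬ ξ.PosSemidef} = 0)
    (hsub : ∀ t : ℝ, 0 ≤ t → ∀ x : Matrix (Fin d) (Fin d) ℝ, x.PosSemidef →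
      p t x Set.univ ≤ 1)
    (hCK : ∀ s t : ℝ, 0 ≤ s → 0 ≤ t → ∀ x : Matrix (Fin d) (Fin d) ℝ, x.PosSemidef →
      ∀ A : Set (Matrix (Fin d) (Fin d) ℝ), MeasurableSet A →
        A ⊆ {ξ : Matrix (Fin d) (Fin d) ℝ | ξ.PosSemidef} →
        p (t + s) x A = ∫⁻ ξ, p s ξ A ∂(p t x))
    (hφ : ∀ t : ℝ, 0 ≤ t → ∀ u : Matrix (Fin d) (Fin d) ℝ, u.PosSemidef → 0 ≤ φ t u)
    (hψ : ∀ t : ℝ, 0 ≤ t → ∀ u : Matrix (Fin d) (Fin d) ℝ, u.PosSemidef →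
      (ψ t u).PosSemidef)
    (haff : ∀ t : ℝ, 0 ≤ t → ∀ u x : Matrix (Fin d) (Fin d) ℝ,
      u.PosSemidef → x.PosSemidef →
      ∫ ξ, Real.exp (-(u * ξ).trace) ∂(p t x)
        = Real.exp (-(φ t u) - ((ψ t u) * x).trace)) :
    ∀ t : ℝ, 0 ≤ t → ∀ u v : Matrix (Fin d) (Fin d) ℝ,
      u.PosSemidef → v.PosSemidef → (u - v).PosSemidef →
      φ t v ≤ φ t u ∧ (ψ t u - ψ t v).PosSemidef :=
  affine_exponents_order_preserving_general p φ ψ hsupp hsub hψ haff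
end

section
/- Let ψ: [0,∞) × S_d^+ → S_d^+ satisfy: ψ(0,u) = u for all u ∈ S_d^+; the semiflow property ψ(t+s,u) = ψ(s,ψ(t,u)) for all s,t ≥ 0; the order-preservation property that v ⪯ u implies ψ(t,v) ⪯ ψ(t,u) for all t ≥ 0; ψ is jointly continuous on [0,∞) × S_d^+; and for each fixed t ≥ 0, the map u ↦ ψ(t,u) is real-analytic on the open set S_d^{++}. Then ψ(t,u) ∈ S_d^{++} for all t ≥ 0 and all u ∈ S_d^{++}. -/
/-! The key fact concerns a monotone map `φ` of `S_d^+` into itself that is analytic on `S_d^{++}`: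
if `xᵀ φ(u) x = 0` for some `u ≻ 0`, then the analytic function `l ↦ xᵀ φ(u + l I) x` is squeezed
between `0` and its value at `l = 0` for small `l ≤ 0`, hence vanishes identically, and monotonicity
gives `xᵀ φ(I) x = 0`. So `φ` preserves `S_d^{++}` as soon as `φ(I) ≻ 0`. For `φ = ψ(t, ·)` this
holds for small `t` by continuity at `ψ(0, I) = I`, and by the semiflow property the set of times
`t` at which `ψ(t, ·)` preserves `S_d^{++}` is closed under addition, so it is all of `[0, ∞)`. -/

attribute [local instance] Matrix.normedAddCommGroup Matrix.normedSpace

open Set Filter Topology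
open scoped MatrixOrder

namespace Matrix

variable {n : Type*} [Fintype n]

lemma dotProduct_mulVec_le_dotProduct_mulVec {A B : Matrix n n ℝ} (h : A ≤ B) (x : n → ℝ) :
    x ⬝ᵥ A *ᵥ x ≤ x ⬝ᵥ B *ᵥ x := by
  have := (le_iff.mp h).dotProduct_mulVec_nonneg x
  rw [star_trivial, sub_mulVec, dotProduct_sub] at this
  linarith

variable [DecidableEq n]

lemma analyticAt_dotProduct_mulVec (x : n → ℝ) (A : Matrix n n ℝ) :
    AnalyticAt ℝ (fun M : Matrix n n ℝ => x ⬝ᵥ M *ᵥ x) A :=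
  ((LinearMap.applyₗ x ∘ₗ LinearMap.applyₗ x ∘ₗ (toLinearMap₂' ℝ).toLinearMap)
    |>.toContinuousLinearMap.analyticAt A).congr
    (.of_forall fun M => toLinearMap₂'_apply' M x x)

lemma PosSemidef.exists_dotProduct_mulVec_eq_zero {A : Matrix n n ℝ} (hA : A.PosSemidef)
    (h : ¬ A.PosDef) : ∃ x ≠ 0, x ⬝ᵥ A *ᵥ x = 0 := by
  rw [hA.posDef_iff_det_ne_zero, not_not, ← exists_mulVec_eq_zero_iff] at h
  obtain ⟨x, hx, hAx⟩ := h
  exact ⟨x, hx, by rw [hAx, dotProduct_zero]⟩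

lemma PosDef.exists_pos_smul_one_le {A : Matrix n n ℝ} (hA : A.PosDef) :
    ∃ c : ℝ, 0 < c ∧ c • (1 : Matrix n n ℝ) ≤ A := by
  cases isEmpty_or_nonempty n
  · exact ⟨1, one_pos, by simp⟩
  · simpa [Algebra.algebraMap_eq_smul_one] using
      (CFC.exists_pos_algebraMap_le_iff hA.isHermitian.isSelfAdjoint).2
        fun x hx ↦ hA.isStrictlyPositive.spectrum_pos hx

lemma PosDef.exists_pos_forall_posDef_add_smul_one {A : Matrix n n ℝ} (hA : A.PosDef) :
    ∃ ε > 0, ∀ l : ℝ, -ε < l → (A + l • 1).PosDef := by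
  obtain ⟨c, hc, hcA⟩ := hA.exists_pos_smul_one_le
  refine ⟨c, hc, fun l hl => ?_⟩
  have hsplit : A + l • 1 = (A - c • 1) + (c + l) • (1 : Matrix n n ℝ) := by
    rw [add_smul]; abel
  rw [hsplit]
  exact PosDef.posSemidef_add (le_iff.mp hcA) (PosDef.one.smul (by linarith))

lemma PosDef.eventually_posDef {α : Type*} {l : Filter α} {f : α → Matrix n n ℝ}
    {A : Matrix n n ℝ} (hA : A.PosDef) (hf : Tendsto f l (𝓝 A))
    (hpsd : ∀ᶠ a in l, (f a).PosSemidef) : ∀ᶠ a in l, (f a).PosDef := by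
  have hdet : ∀ᶠ a in l, (f a).det ≠ 0 :=
    ((continuous_id.matrix_det.tendsto A).comp hf).eventually_ne hA.det_pos.ne'
  filter_upwards [hpsd, hdet] with a ha hdet
  exact ha.posDef_iff_det_ne_zero.mpr hdet

end Matrix

open Matrix

section MonotoneAnalyticMap

variable {n : Type*} [Fintype n] [DecidableEq n] {φ : Matrix n n ℝ → Matrix n n ℝ}

lemma dotProduct_mulVec_apply_add_smul_one_eq_zero
    (hmaps : MapsTo φ {u | u.PosSemidef} {u | u.PosSemidef})
    (hmono : MonotoneOn φ {u | u.PosSemidef}) (han : AnalyticOnNhd ℝ φ {u | u.PosDef})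
    {u : Matrix n n ℝ} (hu : u.PosDef) {x : n → ℝ} (hx : x ⬝ᵥ φ u *ᵥ x = 0)
    {l : ℝ} (hl : 0 ≤ l) : x ⬝ᵥ φ (u + l • 1) *ᵥ x = 0 := by
  obtain ⟨ε, hε, hshift⟩ := hu.exists_pos_forall_posDef_add_smul_one
  set f : ℝ → ℝ := fun l => x ⬝ᵥ φ (u + l • 1) *ᵥ x
  have hf_an : AnalyticOnNhd ℝ f (Ioi (-ε)) := by
    intro l hl
    have hline : AnalyticAt ℝ (fun l : ℝ => u + l • (1 : Matrix n n ℝ)) l := by fun_prop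
    exact (analyticAt_dotProduct_mulVec x _).comp ((han _ (hshift l hl)).comp_of_eq hline rfl)
  have hf_zero : ∀ l ∈ Ioo (-ε) 0, f l = 0 := by
    intro l ⟨hεl, hl0⟩
    have hle : u + l • 1 ≤ u := by
      rw [le_iff, sub_add_cancel_left, ← neg_smul]
      exact PosSemidef.one.smul (by linarith)
    have hnonneg : 0 ≤ f l := by
      simpa using (hmaps (hshift l hεl).posSemidef).dotProduct_mulVec_nonneg x
    refine le_antisymm ?_ hnonneg
    calc f l ≤ x ⬝ᵥ φ u *ᵥ x :=
          dotProduct_mulVec_le_dotProduct_mulVec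
            (hmono (hshift l hεl).posSemidef hu.posSemidef hle) x
      _ = 0 := hx
  have hf_eqOn := hf_an.eqOn_zero_of_preconnected_of_eventuallyEq_zero isPreconnected_Ioi
    (z₀ := -ε / 2) (show -ε < -ε / 2 by linarith)
    (eventually_of_mem (Ioo_mem_nhds (by linarith) (by linarith)) hf_zero)
  exact hf_eqOn (show -ε < l by linarith)

lemma posDef_apply_of_posDef_apply_one
    (hmaps : MapsTo φ {u | u.PosSemidef} {u | u.PosSemidef})
    (hmono : MonotoneOn φ {u | u.PosSemidef}) (han : AnalyticOnNhd ℝ φ {u | u.PosDef})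
    (h1 : (φ 1).PosDef) {u : Matrix n n ℝ} (hu : u.PosDef) : (φ u).PosDef := by
  by_contra h
  obtain ⟨x, hx, hxu⟩ := (hmaps hu.posSemidef).exists_dotProduct_mulVec_eq_zero h
  have hxu1 := dotProduct_mulVec_apply_add_smul_one_eq_zero hmaps hmono han hu hxu zero_le_one
  rw [one_smul] at hxu1
  have hle : (1 : Matrix n n ℝ) ≤ u + 1 := by
    rw [le_iff, add_sub_cancel_right]
    exact hu.posSemidef
  have hmono1 := dotProduct_mulVec_le_dotProduct_mulVec
    (hmono PosSemidef.one (hu.posSemidef.add PosSemidef.one) hle) x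
  have hpos := h1.dotProduct_mulVec_pos hx
  rw [star_trivial] at hpos
  linarith

end MonotoneAnalyticMap

lemma forall_nonneg_of_add_of_eventually_nhdsGE {P : ℝ → Prop}
    (hadd : ∀ s t, 0 ≤ s → 0 ≤ t → P s → P t → P (s + t)) (hsmall : ∀ᶠ t in 𝓝[≥] 0, P t) :
    ∀ t, 0 ≤ t → P t := by
  obtain ⟨δ, hδ : 0 < δ, hP⟩ := mem_nhdsGE_iff_exists_Ico_subset.mp hsmall
  have hmul : ∀ k : ℕ, ∀ r ∈ Ico 0 δ, P (k * r) := by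
    intro k r hr
    induction k with
    | zero => simpa using hP (left_mem_Ico.mpr hδ)
    | succ k ih =>
      rw [Nat.cast_succ, add_one_mul]
      exact hadd _ _ (mul_nonneg k.cast_nonneg hr.1) hr.1 ih (hP hr)
  intro t ht
  obtain ⟨k, hk⟩ := exists_nat_gt (t / δ)
  have hk0 : (0 : ℝ) < k := lt_of_le_of_lt (div_nonneg ht hδ.le) hk
  have := hmul k (t / k) ⟨div_nonneg ht hk0.le, by rwa [div_lt_iff₀ hk0, mul_comm, ← div_lt_iff₀ hδ]⟩
  rwa [mul_div_cancel₀ _ hk0.ne'] at this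

/-- Let `ψ : [0,∞) × S_d^+ → S_d^+` satisfy `ψ(0,u) = u`, the semiflow
property `ψ(t+s,u) = ψ(s,ψ(t,u))`, the order-preservation property (`v ⪯ u` implies
`ψ(t,v) ⪯ ψ(t,u)`), joint continuity on `[0,∞) × S_d^+`, and real-analyticity of
`u ↦ ψ(t,u)` on the open cone `S_d^{++}` of positive definite matrices for each fixed
`t ≥ 0`.  Then `ψ(t,u)` is positive definite for all `t ≥ 0` and all positive
definite `u`. -/
theorem semiflow_preserves_posdef {d : ℕ}
    (ψ : ℝ → Matrix (Fin d) (Fin d) ℝ → Matrix (Fin d) (Fin d) ℝ)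
    (hmaps : ∀ t : ℝ, 0 ≤ t → ∀ u : Matrix (Fin d) (Fin d) ℝ, u.PosSemidef →
      (ψ t u).PosSemidef)
    (hzero : ∀ u : Matrix (Fin d) (Fin d) ℝ, u.PosSemidef → ψ 0 u = u)
    (hflow : ∀ s t : ℝ, 0 ≤ s → 0 ≤ t → ∀ u : Matrix (Fin d) (Fin d) ℝ, u.PosSemidef →
      ψ (t + s) u = ψ s (ψ t u))
    (horder : ∀ t : ℝ, 0 ≤ t → ∀ u v : Matrix (Fin d) (Fin d) ℝ,
      u.PosSemidef → v.PosSemidef → (u - v).PosSemidef →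
      (ψ t u - ψ t v).PosSemidef)
    (hcont : ContinuousOn (fun q : ℝ × Matrix (Fin d) (Fin d) ℝ => ψ q.1 q.2)
      (Set.Ici (0 : ℝ) ×ˢ {u : Matrix (Fin d) (Fin d) ℝ | u.PosSemidef}))
    (hanalytic : ∀ t : ℝ, 0 ≤ t →
      AnalyticOnNhd ℝ (ψ t) {u : Matrix (Fin d) (Fin d) ℝ | u.PosDef}) :
    ∀ t : ℝ, 0 ≤ t → ∀ u : Matrix (Fin d) (Fin d) ℝ, u.PosDef → (ψ t u).PosDef := by
  have hone : ∀ t, 0 ≤ t → (ψ t 1).PosDef → ∀ u : Matrix (Fin d) (Fin d) ℝ, u.PosDef →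
      (ψ t u).PosDef := fun t ht =>
    posDef_apply_of_posDef_apply_one (fun u hu => hmaps t ht u hu)
      (fun v hv u hu hvu => horder t ht u v hu hv hvu) (hanalytic t ht)
  refine forall_nonneg_of_add_of_eventually_nhdsGE (fun s t hs ht hPs hPt u hu => ?_) ?_
  · rw [hflow t s ht hs u hu.posSemidef]
    exact hPt _ (hPs u hu)
  · have hcont_at : ContinuousWithinAt (fun t => ψ t 1) (Ici 0) 0 :=
      hcont.comp (continuous_id.prodMk continuous_const).continuousOn
        (fun t ht => ⟨ht, PosSemidef.one⟩) 0 self_mem_Ici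
    have hcont_one : Tendsto (fun t => ψ t 1) (𝓝[≥] 0) (𝓝 1) := by
      simpa only [hzero 1 PosSemidef.one] using hcont_at.tendsto
    have hpsd : ∀ᶠ t in 𝓝[≥] 0, (ψ t 1).PosSemidef :=
      eventually_mem_nhdsWithin.mono fun t ht => hmaps t ht 1 PosSemidef.one
    filter_upwards [self_mem_nhdsWithin, PosDef.one.eventually_posDef hcont_one hpsd]
      with t ht hψt using hone t ht hψt
end

section
/- Let g: S_d^+ → ℝ be additive, i.e., g(x + y) = g(x) + g(y) for all x,y ∈ S_d^+. Then g extends to an additive function on S_d. If moreover g is Borel measurable on S_d^+, then there exists c ∈ S_d such that g(x) = ⟨c,x⟩ for all x ∈ S_d^+. -/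
open MeasureTheory Matrix Pointwise
open scoped ComplexOrder

theorem AddMonoidHom.apply_eq_mul_apply_one_of_measurable (F : ℝ →+ ℝ) (hF : Measurable F)
    (t : ℝ) : F t = t * F 1 := by
  simpa using map_real_smul F (Measure.AddMonoidHom.continuous_of_measurable F hF) t 1

theorem measurable_domRestrict_of_measurableSet_preimage_inter {α β : Type*} [MeasurableSpace α]
    [MeasurableSpace β] {f : α → β} {s : Set α}
    (hf : ∀ E : Set β, MeasurableSet E → MeasurableSet (f ⁻¹' E ∩ s)) :
    Measurable (s.domRestrict f) := fun E hE =>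
  ⟨f ⁻¹' E ∩ s, hf E hE, by ext x; simp⟩

section ConeExtension

variable {G M : Type*} [AddCommGroup G] [AddCommGroup M] {C : AddSubmonoid G} {f : G → M}

def AdditiveOn (C : AddSubmonoid G) (f : G → M) : Prop :=
  ∀ x ∈ C, ∀ y ∈ C, f (x + y) = f x + f y

-- Junk outside `C - C`, where no decomposition `x = p - q` exists.
noncomputable def coneExtension (C : AddSubmonoid G) (f : G → M) (x : G) : M :=
  let pq := Classical.epsilon fun pq : G × G => pq.1 ∈ C ∧ pq.2 ∈ C ∧ pq.1 - pq.2 = x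
  f pq.1 - f pq.2

theorem AdditiveOn.sub_eq_sub (hf : AdditiveOn C f) {p q p' q' : G} (hp : p ∈ C) (hq : q ∈ C)
    (hp' : p' ∈ C) (hq' : q' ∈ C) (h : p - q = p' - q') : f p - f q = f p' - f q' := by
  rw [sub_eq_sub_iff_add_eq_add, ← hf p hp q' hq', ← hf p' hp' q hq,
    sub_eq_sub_iff_add_eq_add.1 h]

theorem AdditiveOn.coneExtension_sub (hf : AdditiveOn C f) {p q : G} (hp : p ∈ C) (hq : q ∈ C) :
    coneExtension C f (p - q) = f p - f q := by
  obtain ⟨hp', hq', h⟩ := Classical.epsilon_spec (p := fun pq : G × G =>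
    pq.1 ∈ C ∧ pq.2 ∈ C ∧ pq.1 - pq.2 = p - q) ⟨(p, q), hp, hq, rfl⟩
  exact hf.sub_eq_sub hp' hq' hp hq h

theorem AdditiveOn.coneExtension_of_mem (hf : AdditiveOn C f) {p : G} (hp : p ∈ C) :
    coneExtension C f p = f p := by
  have hf0 : f 0 = 0 := by simpa using hf 0 C.zero_mem 0 C.zero_mem
  simpa [hf0] using hf.coneExtension_sub hp C.zero_mem

theorem AdditiveOn.coneExtension_add (hf : AdditiveOn C f) {x y : G} (hx : x ∈ (C : Set G) - C)
    (hy : y ∈ (C : Set G) - C) :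
    coneExtension C f (x + y) = coneExtension C f x + coneExtension C f y := by
  obtain ⟨p, hp, q, hq, rfl⟩ := hx
  obtain ⟨p', hp', q', hq', rfl⟩ := hy
  rw [show p - q + (p' - q') = (p + p') - (q + q') by abel,
    hf.coneExtension_sub (C.add_mem hp hp') (C.add_mem hq hq'), hf.coneExtension_sub hp hq,
    hf.coneExtension_sub hp' hq', hf p hp p' hp', hf q hq q' hq']
  abel

theorem AdditiveOn.coneExtension_smul [Module ℝ G] [Module ℝ M]
    (hf : AdditiveOn C f) (hC : ∀ a ∈ C, ∀ t : ℝ, 0 ≤ t → t • a ∈ C)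
    (hhom : ∀ a ∈ C, ∀ t : ℝ, 0 ≤ t → f (t • a) = t • f a)
    {x : G} (hx : x ∈ (C : Set G) - C) (r : ℝ) :
    coneExtension C f (r • x) = r • coneExtension C f x := by
  obtain ⟨p, hp, q, hq, rfl⟩ := hx
  rw [hf.coneExtension_sub hp hq]
  rcases le_or_gt 0 r with hr | hr
  · rw [smul_sub, hf.coneExtension_sub (hC p hp r hr) (hC q hq r hr), hhom p hp r hr,
      hhom q hq r hr, smul_sub]
  · have hr' : 0 ≤ -r := by linarith
    rw [show r • (p - q) = (-r) • q - (-r) • p by module,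
      hf.coneExtension_sub (hC q hq _ hr') (hC p hp _ hr'), hhom q hq _ hr', hhom p hp _ hr']
    module

theorem AdditiveOn.map_smul_of_measurable_domRestrict [Module ℝ G] [TopologicalSpace G]
    [ContinuousSMul ℝ G] [MeasurableSpace G] [BorelSpace G] {f : G → ℝ}
    (hf : AdditiveOn C f) (hC : ∀ a ∈ C, ∀ t : ℝ, 0 ≤ t → t • a ∈ C)
    (hmeas : Measurable ((C : Set G).domRestrict f)) {a : G} (ha : a ∈ C) {t : ℝ} (ht : 0 ≤ t) :
    f (t • a) = t * f a := by
  have hpos (s : ℝ) : s⁺ • a ∈ C := hC a ha _ (posPart_nonneg s)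
  have hneg (s : ℝ) : s⁻ • a ∈ C := hC a ha _ (negPart_nonneg s)
  have hsplit (s : ℝ) : s • a = s⁺ • a - s⁻ • a := by rw [← sub_smul, posPart_sub_negPart]
  let F : ℝ →+ ℝ := AddMonoidHom.mk' (fun s => coneExtension C f (s • a)) fun s u => by
    rw [add_smul, hsplit s, hsplit u]
    exact hf.coneExtension_add ⟨_, hpos s, _, hneg s, rfl⟩ ⟨_, hpos u, _, hneg u, rfl⟩
  have hF : ⇑F = fun s => (C : Set G).domRestrict f ⟨s⁺ • a, hpos s⟩
      - (C : Set G).domRestrict f ⟨s⁻ • a, hneg s⟩ := by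
    ext s
    simp only [F, AddMonoidHom.mk'_apply, Set.domRestrict_apply]
    rw [hsplit s, hf.coneExtension_sub (hpos s) (hneg s)]
  have hFm : Measurable F := by
    rw [hF]
    refine (hmeas.comp ?_).sub (hmeas.comp ?_) <;> refine Measurable.subtype_mk ?_
    · exact (continuous_posPart.smul continuous_const).measurable
    · exact (continuous_negPart.smul continuous_const).measurable
  simpa [F, hf.coneExtension_of_mem (hC a ha t ht), hf.coneExtension_of_mem ha]
    using F.apply_eq_mul_apply_one_of_measurable hFm t

end ConeExtension

namespace Matrix

theorem eq_trace_mul_of_linearMap {n R : Type*} [Fintype n] [DecidableEq n] [CommSemiring R]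
    (L : Matrix n n R →ₗ[R] R) (x : Matrix n n R) :
    L x = (of (fun i j => L (single j i 1)) * x).trace := by
  conv_lhs => rw [matrix_eq_sum_single x]
  conv_rhs => rw [matrix_eq_sum_single (of _)]
  simp only [map_sum, Finset.sum_mul, trace_sum, trace_single_mul, of_apply, smul_eq_mul]
  rw [Finset.sum_comm]
  refine Finset.sum_congr rfl fun i _ => Finset.sum_congr rfl fun j _ => ?_
  rw [show single j i (x j i) = x j i • single j i (1 : R) by
      rw [smul_single, smul_eq_mul, mul_one], map_smul, smul_eq_mul, mul_comm]

theorem exists_isSymm_eq_trace_mul {n K : Type*} [Fintype n] [DecidableEq n] [Field K]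
    [NeZero (2 : K)] (φ : Matrix n n K → K)
    (hadd : ∀ x y : Matrix n n K, x.IsSymm → y.IsSymm → φ (x + y) = φ x + φ y)
    (hsmul : ∀ (r : K) (x : Matrix n n K), x.IsSymm → φ (r • x) = r * φ x) :
    ∃ c : Matrix n n K, c.IsSymm ∧ ∀ x : Matrix n n K, x.IsSymm → φ x = (c * x).trace := by
  have hsymm (x : Matrix n n K) : ((2 : K)⁻¹ • (x + xᵀ)).IsSymm :=
    (isSymm_add_transpose_self x).smul _
  let L : Matrix n n K →ₗ[K] K :=
    { toFun := fun x => φ ((2 : K)⁻¹ • (x + xᵀ))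
      map_add' := fun x y => by
        rw [← hadd _ _ (hsymm x) (hsymm y), transpose_add, ← smul_add]
        congr 2
        abel
      map_smul' := fun r x => by
        rw [RingHom.id_apply, smul_eq_mul, ← hsmul r _ (hsymm x), transpose_smul, ← smul_add,
          smul_comm] }
  have hL {x : Matrix n n K} (hx : x.IsSymm) : L x = φ x := by
    show φ ((2 : K)⁻¹ • (x + xᵀ)) = φ x
    rw [hx.eq, ← two_smul K x, smul_smul, inv_mul_cancel₀ two_ne_zero, one_smul]
  refine ⟨of fun i j => L (single j i 1), IsSymm.ext fun i j => ?_,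
    fun x hx => (hL hx).symm.trans (eq_trace_mul_of_linearMap L x)⟩
  show φ _ = φ _
  rw [transpose_single, transpose_single, add_comm]

def posSemidefAddSubmonoid (n 𝕜 : Type*) [Fintype n] [RCLike 𝕜] :
    AddSubmonoid (Matrix n n 𝕜) where
  carrier := {x | x.PosSemidef}
  add_mem' := PosSemidef.add
  zero_mem' := PosSemidef.zero

theorem IsHermitian.mem_posSemidefAddSubmonoid_sub {n 𝕜 : Type*} [Fintype n] [DecidableEq n]
    [RCLike 𝕜] {x : Matrix n n 𝕜} (hx : x.IsHermitian) :
    x ∈ (posSemidefAddSubmonoid n 𝕜 : Set (Matrix n n 𝕜)) - posSemidefAddSubmonoid n 𝕜 := by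
  refine ⟨((2 : 𝕜)⁻¹ • (x + 1))ᴴ * ((2 : 𝕜)⁻¹ • (x + 1)), posSemidef_conjTranspose_mul_self _,
    ((2 : 𝕜)⁻¹ • (x - 1))ᴴ * ((2 : 𝕜)⁻¹ • (x - 1)), posSemidef_conjTranspose_mul_self _, ?_⟩
  simp only [conjTranspose_smul, conjTranspose_add, conjTranspose_sub, conjTranspose_one, hx.eq,
    star_inv₀, star_ofNat, smul_mul_smul_comm, ← smul_sub]
  have h4 : (x + 1) * (x + 1) - (x - 1) * (x - 1) = (4 : 𝕜) • x := by
    simp only [add_mul, mul_add, sub_mul, mul_sub, mul_one, one_mul]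
    module
  rw [h4, smul_smul]
  norm_num

end Matrix

/-- Let `g : S_d^+ → ℝ` be additive, i.e. `g(x+y) = g(x) + g(y)` for
all positive semidefinite `x, y`.  Then `g` extends to an additive function on the
space `S_d` of symmetric matrices.  If moreover `g` is Borel measurable on `S_d^+`,
then there exists a symmetric matrix `c` with `g(x) = ⟨c,x⟩ = tr(cx)` for all
positive semidefinite `x`. -/
theorem additive_on_cone_is_linear {d : ℕ} (g : Matrix (Fin d) (Fin d) ℝ → ℝ)
    (hadd : ∀ x y : Matrix (Fin d) (Fin d) ℝ, x.PosSemidef → y.PosSemidef →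
      g (x + y) = g x + g y) :
    (∃ g' : Matrix (Fin d) (Fin d) ℝ → ℝ,
      (∀ x y : Matrix (Fin d) (Fin d) ℝ, x.IsSymm → y.IsSymm →
        g' (x + y) = g' x + g' y) ∧
      (∀ x : Matrix (Fin d) (Fin d) ℝ, x.PosSemidef → g' x = g x)) ∧
    ((∀ E : Set ℝ, MeasurableSet E →
        MeasurableSet (g ⁻¹' E ∩ {x : Matrix (Fin d) (Fin d) ℝ | x.PosSemidef})) →
      ∃ c : Matrix (Fin d) (Fin d) ℝ, c.IsSymm ∧
        ∀ x : Matrix (Fin d) (Fin d) ℝ, x.PosSemidef → g x = (c * x).trace) := by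
  let C := posSemidefAddSubmonoid (Fin d) ℝ
  have hC : AdditiveOn C g := fun x hx y hy => hadd x y hx hy
  have hsymm {x : Matrix (Fin d) (Fin d) ℝ} (hx : x.IsSymm) :
      x ∈ (C : Set (Matrix (Fin d) (Fin d) ℝ)) - C :=
    (isHermitian_iff_isSymm.2 hx).mem_posSemidefAddSubmonoid_sub
  have hext_add (x y : Matrix (Fin d) (Fin d) ℝ) (hx : x.IsSymm) (hy : y.IsSymm) :
      coneExtension C g (x + y) = coneExtension C g x + coneExtension C g y :=
    hC.coneExtension_add (hsymm hx) (hsymm hy)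
  refine ⟨⟨coneExtension C g, hext_add, fun x hx => hC.coneExtension_of_mem hx⟩, fun hmeas => ?_⟩
  have hsmul_mem : ∀ a ∈ C, ∀ t : ℝ, 0 ≤ t → t • a ∈ C := fun a ha t ht => PosSemidef.smul ha ht
  have hhom : ∀ a ∈ C, ∀ t : ℝ, 0 ≤ t → g (t • a) = t • g a := fun a ha t ht =>
    hC.map_smul_of_measurable_domRestrict hsmul_mem
      (measurable_domRestrict_of_measurableSet_preimage_inter hmeas) ha ht
  obtain ⟨c, hc, hrep⟩ := exists_isSymm_eq_trace_mul (coneExtension C g) hext_add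
    fun r x hx => hC.coneExtension_smul hsmul_mem hhom (hsymm hx) r
  exact ⟨c, hc, fun x hx =>
    (hC.coneExtension_of_mem hx).symm.trans (hrep x (isHermitian_iff_isSymm.1 hx.isHermitian))⟩
end

section
/- Let h: S_d^+ → ℝ be Borel measurable, strictly positive, and satisfy Cauchy's exponential equation h(x + y) = h(x)·h(y) for all x,y ∈ S_d^+. Then there exists c ∈ S_d such that h(x) = e^{−⟨c,x⟩} for all x ∈ S_d^+. If in addition h(x) ≤ 1 for all x ∈ S_d^+, then c ∈ S_d^+. -/
open Matrix

lemma Measurable.comp_of_measurableSet_preimage_inter {α M β : Type*} [MeasurableSpace α]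
    [MeasurableSpace M] [MeasurableSpace β] {h : M → β} {S : Set M}
    (hh : ∀ E : Set β, MeasurableSet E → MeasurableSet (h ⁻¹' E ∩ S)) {φ : α → M}
    (hφ : Measurable φ) (hφS : ∀ a, φ a ∈ S) : Measurable (h ∘ φ) := fun E hE => by
  simpa [Set.preimage_comp, Set.preimage_inter, Set.preimage_eq_univ_iff.2 (by
    rintro _ ⟨a, rfl⟩; exact hφS a)] using hφ (hh E hE)

lemma LinearMap.apply_eq_trace_mul {n R : Type*} [Fintype n] [DecidableEq n] [CommSemiring R]
    (L : Matrix n n R →ₗ[R] R) (x : Matrix n n R) :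
    L x = (of (fun i j : n => L (Matrix.single j i (1 : R))) * x).trace := by
  simp only [Matrix.trace, diag_apply, Matrix.mul_apply, of_apply]
  conv_lhs => rw [matrix_eq_sum_single x]
  rw [map_sum, Finset.sum_comm]
  refine Finset.sum_congr rfl fun i _ => ?_
  rw [map_sum]
  refine Finset.sum_congr rfl fun j _ => ?_
  rw [show Matrix.single i j (x i j) = x i j • Matrix.single i j 1 by
    rw [smul_single, smul_eq_mul, mul_one], map_smul, smul_eq_mul, mul_comm]

namespace Matrix

lemma posSemidef_of_isSymm_of_trace_mul_nonneg {n : Type*} [Fintype n] {c : Matrix n n ℝ}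
    (hc : c.IsSymm) (h : ∀ x : Matrix n n ℝ, x.PosSemidef → 0 ≤ (c * x).trace) :
    c.PosSemidef := by
  refine .of_dotProduct_mulVec_nonneg (isHermitian_iff_isSymm.2 hc) fun v => ?_
  have := h _ (posSemidef_vecMulVec_self_star v)
  rwa [mul_vecMulVec, trace_vecMulVec, star_trivial, dotProduct_comm] at this

noncomputable section

section SymmPart

variable {n : Type*}

def symmPart (x : Matrix n n ℝ) : Matrix n n ℝ := (2 : ℝ)⁻¹ • (x + xᵀ)

lemma isHermitian_symmPart (x : Matrix n n ℝ) : x.symmPart.IsHermitian := by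
  rw [isHermitian_iff_isSymm, IsSymm, symmPart, transpose_smul, transpose_add, transpose_transpose,
    add_comm]

lemma symmPart_add (x y : Matrix n n ℝ) : (x + y).symmPart = x.symmPart + y.symmPart := by
  simp only [symmPart, transpose_add]
  module

lemma symmPart_transpose (x : Matrix n n ℝ) : xᵀ.symmPart = x.symmPart := by
  rw [symmPart, symmPart, transpose_transpose, add_comm]

lemma IsHermitian.symmPart_eq {x : Matrix n n ℝ} (hx : x.IsHermitian) : x.symmPart = x := by
  rw [symmPart, (isHermitian_iff_isSymm.1 hx).eq]
  module

lemma continuous_symmPart : Continuous (symmPart : Matrix n n ℝ → Matrix n n ℝ) := by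
  unfold symmPart; fun_prop

end SymmPart

variable {n : Type*} [Fintype n]

def entryAbsSum (x : Matrix n n ℝ) : ℝ := ∑ i, ∑ j, |x i j|

lemma entryAbsSum_nonneg (x : Matrix n n ℝ) : 0 ≤ x.entryAbsSum := by
  unfold entryAbsSum; positivity

lemma continuous_entryAbsSum : Continuous (entryAbsSum : Matrix n n ℝ → ℝ) := by
  unfold entryAbsSum; fun_prop

lemma abs_dotProduct_mulVec_le (x : Matrix n n ℝ) (v : n → ℝ) :
    |v ⬝ᵥ x *ᵥ v| ≤ x.entryAbsSum * (v ⬝ᵥ v) := by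
  have hv : ∀ i j, |v i| * |v j| ≤ v ⬝ᵥ v := fun i j => by
    have hsq : ∀ k, |v k| ^ 2 ≤ v ⬝ᵥ v := fun k => by
      rw [sq_abs, sq]
      exact Finset.single_le_sum (f := fun k => v k * v k) (fun k _ => mul_self_nonneg (v k))
        (Finset.mem_univ k)
    nlinarith [hsq i, hsq j, sq_nonneg (|v i| - |v j|)]
  calc |v ⬝ᵥ x *ᵥ v| = |∑ i, ∑ j, x i j * (v i * v j)| := by
        simp only [dotProduct, mulVec, Finset.mul_sum]
        congr 1; refine Finset.sum_congr rfl fun i _ => Finset.sum_congr rfl fun j _ => by ring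
    _ ≤ ∑ i, ∑ j, |x i j| * (|v i| * |v j|) := by
        refine (Finset.abs_sum_le_sum_abs _ _).trans (Finset.sum_le_sum fun i _ => ?_)
        refine (Finset.abs_sum_le_sum_abs _ _).trans_eq (Finset.sum_congr rfl fun j _ => ?_)
        rw [abs_mul, abs_mul]
    _ ≤ ∑ i, ∑ j, |x i j| * (v ⬝ᵥ v) := by
        gcongr with i _ j _; exact hv i j
    _ = x.entryAbsSum * (v ⬝ᵥ v) := by simp only [entryAbsSum, Finset.sum_mul]

variable [DecidableEq n]

lemma IsHermitian.posSemidef_add_entryAbsSum_smul_one {x : Matrix n n ℝ} (hx : x.IsHermitian) :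
    (x + x.entryAbsSum • (1 : Matrix n n ℝ)).PosSemidef := by
  refine .of_dotProduct_mulVec_nonneg (hx.add (isHermitian_one.smul (.all _))) fun v => ?_
  have hq := neg_le_of_abs_le (abs_dotProduct_mulVec_le x v)
  simp only [star_trivial, add_mulVec, smul_mulVec, one_mulVec, dotProduct_add, dotProduct_smul,
    smul_eq_mul]
  linarith

section ConeExtension

def coneExtension (f : Matrix n n ℝ → ℝ) (x : Matrix n n ℝ) : ℝ :=
  f (x + x.entryAbsSum • 1) - f (x.entryAbsSum • 1)

variable {f : Matrix n n ℝ → ℝ}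

lemma coneExtension_eq
    (hf : ∀ x y : Matrix n n ℝ, x.PosSemidef → y.PosSemidef → f (x + y) = f x + f y)
    {x : Matrix n n ℝ} (hx : x.IsHermitian) {s : ℝ} (hs : 0 ≤ s) (hxs : (x + s • 1).PosSemidef) :
    coneExtension f x = f (x + s • 1) - f (s • 1) := by
  have shift : ∀ a b : ℝ, 0 ≤ a → a ≤ b → (x + a • 1).PosSemidef →
      f (x + b • 1) - f (b • 1) = f (x + a • 1) - f (a • 1) := by
    intro a b ha hab hxa
    have hba : ((b - a) • (1 : Matrix n n ℝ)).PosSemidef := PosSemidef.one.smul (sub_nonneg.2 hab)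
    rw [show x + b • 1 = (x + a • 1) + (b - a) • 1 by module,
      show b • (1 : Matrix n n ℝ) = a • 1 + (b - a) • 1 by module,
      hf _ _ hxa hba, hf _ _ (PosSemidef.one.smul ha) hba]
    ring
  rcases le_total s x.entryAbsSum with h | h
  · exact shift s _ hs h hxs
  · exact (shift _ s x.entryAbsSum_nonneg h hx.posSemidef_add_entryAbsSum_smul_one).symm

lemma coneExtension_of_posSemidef
    (hf : ∀ x y : Matrix n n ℝ, x.PosSemidef → y.PosSemidef → f (x + y) = f x + f y)
    {x : Matrix n n ℝ} (hx : x.PosSemidef) : coneExtension f x = f x := by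
  have hf0 : f 0 = 0 := by simpa using hf 0 0 .zero .zero
  rw [coneExtension_eq hf hx.isHermitian le_rfl (by simpa using hx), zero_smul, add_zero, hf0,
    sub_zero]

lemma coneExtension_add
    (hf : ∀ x y : Matrix n n ℝ, x.PosSemidef → y.PosSemidef → f (x + y) = f x + f y)
    {x y : Matrix n n ℝ} (hx : x.IsHermitian) (hy : y.IsHermitian) :
    coneExtension f (x + y) = coneExtension f x + coneExtension f y := by
  have hx' := hx.posSemidef_add_entryAbsSum_smul_one
  have hy' := hy.posSemidef_add_entryAbsSum_smul_one
  have hsum : x + y + (x.entryAbsSum + y.entryAbsSum) • (1 : Matrix n n ℝ) =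
      (x + x.entryAbsSum • 1) + (y + y.entryAbsSum • 1) := by module
  rw [coneExtension_eq hf (hx.add hy) (add_nonneg x.entryAbsSum_nonneg y.entryAbsSum_nonneg)
      (hsum ▸ hx'.add hy'), hsum, add_smul, hf _ _ hx' hy',
    hf _ _ (PosSemidef.one.smul x.entryAbsSum_nonneg) (PosSemidef.one.smul y.entryAbsSum_nonneg)]
  simp only [coneExtension]
  ring

def symmConeExtension
    (hf : ∀ x y : Matrix n n ℝ, x.PosSemidef → y.PosSemidef → f (x + y) = f x + f y) :
    Matrix n n ℝ →+ ℝ :=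
  AddMonoidHom.mk' (fun x => coneExtension f x.symmPart) fun x y => by
    rw [symmPart_add, coneExtension_add hf x.isHermitian_symmPart y.isHermitian_symmPart]

variable (hf : ∀ x y : Matrix n n ℝ, x.PosSemidef → y.PosSemidef → f (x + y) = f x + f y)

lemma symmConeExtension_apply (x : Matrix n n ℝ) :
    symmConeExtension hf x = coneExtension f x.symmPart := rfl

lemma symmConeExtension_transpose (x : Matrix n n ℝ) :
    symmConeExtension hf xᵀ = symmConeExtension hf x := by
  rw [symmConeExtension_apply, symmConeExtension_apply, symmPart_transpose]

lemma symmConeExtension_of_posSemidef {x : Matrix n n ℝ} (hx : x.PosSemidef) :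
    symmConeExtension hf x = f x := by
  rw [symmConeExtension_apply, hx.isHermitian.symmPart_eq, coneExtension_of_posSemidef hf hx]

end ConeExtension

lemma continuous_of_measurable_addMonoidHom {d : ℕ} (G : Matrix (Fin d) (Fin d) ℝ →+ ℝ)
    (hG : Measurable G) : Continuous G := by
  let := Matrix.normedAddCommGroup (m := Fin d) (n := Fin d) (α := ℝ)
  let := Matrix.normedSpace (R := ℝ) (m := Fin d) (n := Fin d) (α := ℝ)
  have : ProperSpace (Matrix (Fin d) (Fin d) ℝ) := FiniteDimensional.proper_real _
  -- `⟨rfl⟩`: the sup norm induces the product topology, whose Borel sets are the measurable sets.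
  exact @MeasureTheory.Measure.AddMonoidHom.continuous_of_measurable _ _ _ _ ⟨rfl⟩ _ _ _ _ _ G hG

lemma measurable_symmConeExtension {d : ℕ} {f : Matrix (Fin d) (Fin d) ℝ → ℝ}
    (hf : ∀ x y : Matrix (Fin d) (Fin d) ℝ, x.PosSemidef → y.PosSemidef → f (x + y) = f x + f y)
    (hfmeas : ∀ E : Set ℝ, MeasurableSet E →
      MeasurableSet (f ⁻¹' E ∩ {x : Matrix (Fin d) (Fin d) ℝ | x.PosSemidef})) :
    Measurable (symmConeExtension hf) := by
  have hcomp : ∀ ψ : Matrix (Fin d) (Fin d) ℝ → Matrix (Fin d) (Fin d) ℝ, Continuous ψ →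
      (∀ x, (ψ x).PosSemidef) → Measurable (f ∘ ψ) := fun ψ hψ hψS =>
    .comp_of_measurableSet_preimage_inter hfmeas hψ.measurable hψS
  have hs := continuous_entryAbsSum.comp (continuous_symmPart (n := Fin d))
  exact (hcomp _ (continuous_symmPart.add (hs.smul continuous_const))
      fun x => x.isHermitian_symmPart.posSemidef_add_entryAbsSum_smul_one).sub
    (hcomp _ (hs.smul continuous_const) fun x => PosSemidef.one.smul (entryAbsSum_nonneg _))

end

end Matrix

/-- Let `h : S_d^+ → ℝ` be Borel measurable, strictly positive, and
satisfy Cauchy's exponential equation `h(x+y) = h(x)·h(y)` for all positive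
semidefinite `x, y`.  Then there is a symmetric matrix `c` with
`h(x) = exp(−⟨c,x⟩) = exp(−tr(cx))` for all positive semidefinite `x`.  If in
addition `h ≤ 1` on the cone, then `c` is positive semidefinite. -/
theorem cauchy_exponential_equation_on_cone {d : ℕ}
    (h : Matrix (Fin d) (Fin d) ℝ → ℝ)
    (hmeas : ∀ E : Set ℝ, MeasurableSet E →
      MeasurableSet (h ⁻¹' E ∩ {x : Matrix (Fin d) (Fin d) ℝ | x.PosSemidef}))
    (hpos : ∀ x : Matrix (Fin d) (Fin d) ℝ, x.PosSemidef → 0 < h x)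
    (hmul : ∀ x y : Matrix (Fin d) (Fin d) ℝ, x.PosSemidef → y.PosSemidef →
      h (x + y) = h x * h y) :
    ∃ c : Matrix (Fin d) (Fin d) ℝ, c.IsSymm ∧
      (∀ x : Matrix (Fin d) (Fin d) ℝ, x.PosSemidef →
        h x = Real.exp (-(c * x).trace)) ∧
      ((∀ x : Matrix (Fin d) (Fin d) ℝ, x.PosSemidef → h x ≤ 1) → c.PosSemidef) := by
  set f := fun x => Real.log (h x)
  have hf : ∀ x y : Matrix (Fin d) (Fin d) ℝ, x.PosSemidef → y.PosSemidef →
      f (x + y) = f x + f y := fun x y hx hy => by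
    simp only [f, hmul x y hx hy, Real.log_mul (hpos x hx).ne' (hpos y hy).ne']
  set G := symmConeExtension hf
  have hG : Continuous G := continuous_of_measurable_addMonoidHom G
    (measurable_symmConeExtension hf fun E hE => hmeas _ (Real.measurable_log hE))
  set L := (G.toRealLinearMap hG).toLinearMap
  set c := -of fun i j => L (single j i 1)
  have hc : c.IsSymm := by
    ext i j
    simp only [c, transpose_apply, Matrix.neg_apply, of_apply, neg_inj]
    rw [← transpose_single]
    exact symmConeExtension_transpose hf _
  have htrace : ∀ x, x.PosSemidef → (c * x).trace = -f x := fun x hx => by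
    rw [← symmConeExtension_of_posSemidef hf hx, neg_mul, trace_neg, ← L.apply_eq_trace_mul]
    rfl
  refine ⟨c, hc, fun x hx => ?_, fun hle => ?_⟩
  · rw [htrace x hx, neg_neg, Real.exp_log (hpos x hx)]
  · exact posSemidef_of_isSymm_of_trace_mul_nonneg hc fun x hx => by
      rw [htrace x hx, neg_nonneg]
      exact Real.log_nonpos (hpos x hx).le (hle x hx)
end

section
/- A function f on S_d^+ is the restriction to S_d^+ of a Schwartz function on S_d if and only if f is the restriction to S_d^+ of a smooth function G: S_d → ℝ for which there exists ε > 0 such that for all k, n ∈ ℕ, sup {‖x‖^k · ‖D^n G(x)‖ : x ∈ S_d, dist(x, S_d^+) ≤ ε} < ∞, where D^n G denotes the n-th (total) derivative of G. -/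
/-!
If `G` is smooth and rapidly decreasing on the closed `ε`-neighbourhood of `S_d^+`, multiply it by
a smooth cutoff `χ` that is `1` on `S_d^+`, vanishes outside that neighbourhood and has bounded
derivatives of every order: by the Leibniz rule `χ G` is a Schwartz function, and it agrees with
`G` on `S_d^+`. The cutoff is the indicator of the `ε / 2`-neighbourhood mollified by a bump of
radius `ε / 2`; differentiating only the bump shows that every derivative of `χ` is the
convolution of a bounded function with an integrable one, hence bounded.
-/

attribute [local instance] Matrix.normedAddCommGroup Matrix.normedSpace

/-- The space `S_d` of real symmetric `d×d` matrices, as a submodule of the matrix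
space (a finite-dimensional real normed space). -/
def SymMat (d : ℕ) : Submodule ℝ (Matrix (Fin d) (Fin d) ℝ) where
  carrier := {A | A.IsSymm}
  add_mem' := by
    intro a b ha hb
    simp only [Set.mem_setOf_eq, Matrix.IsSymm] at *
    rw [Matrix.transpose_add, ha, hb]
  zero_mem' := by simp [Matrix.IsSymm]
  smul_mem' := by
    intro c a ha
    simp only [Set.mem_setOf_eq, Matrix.IsSymm] at *
    rw [Matrix.transpose_smul, ha]

/-- The cone `S_d^+` of positive semidefinite matrices inside `S_d`. -/
def psdSet (d : ℕ) : Set (SymMat d) :=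
  {x : SymMat d | (x : Matrix (Fin d) (Fin d) ℝ).PosSemidef}

open MeasureTheory Metric Set Function ContinuousLinearMap
open scoped Convolution ContDiff

universe u

section Convolution

variable {G : Type u} {E' : Type*} [NormedAddCommGroup G] [MeasurableSpace G]
  [NormedAddCommGroup E'] [NormedSpace ℝ E'] {μ : Measure G}

theorem norm_convolution_le_of_norm_le {E F : Type*} [NormedAddCommGroup E] [NormedSpace ℝ E]
    [NormedAddCommGroup F] [NormedSpace ℝ F] (L : E →L[ℝ] E' →L[ℝ] F) {f : G → E} {g : G → E'}
    {M : ℝ} (hf : Integrable f μ) (hg : ∀ x, ‖g x‖ ≤ M) (x : G) :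
    ‖(f ⋆[L, μ] g) x‖ ≤ ‖L‖ * M * ∫ t, ‖f t‖ ∂μ := by
  rw [convolution_def, ← integral_const_mul]
  refine norm_integral_le_of_norm_le (hf.norm.const_mul _) (.of_forall fun t => ?_)
  calc ‖L (f t) (g (x - t))‖ ≤ ‖L‖ * ‖f t‖ * ‖g (x - t)‖ := L.le_opNorm₂ _ _
    _ ≤ ‖L‖ * ‖f t‖ * M := by gcongr; exact hg _
    _ = ‖L‖ * M * ‖f t‖ := by ring

theorem exists_bound_iteratedFDeriv_convolution_left [NormedSpace ℝ G] [BorelSpace G]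
    [SFinite μ] [IsFiniteMeasureOnCompacts μ] [μ.IsAddLeftInvariant] [μ.IsNegInvariant]
    {g : G → E'} {M : ℝ}
    (hg : LocallyIntegrable g μ) (hgM : ∀ x, ‖g x‖ ≤ M) (n : ℕ) :
    ∀ {E F : Type u} [NormedAddCommGroup E] [NormedSpace ℝ E] [NormedAddCommGroup F]
      [NormedSpace ℝ F] (L : E →L[ℝ] E' →L[ℝ] F) {f : G → E},
      HasCompactSupport f → ContDiff ℝ ∞ f →
      ∃ C, ∀ x, ‖iteratedFDeriv ℝ n (f ⋆[L, μ] g) x‖ ≤ C := by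
  induction n with
  | zero =>
    intro E F _ _ _ _ L f hcf hf
    exact ⟨_, fun x => (norm_iteratedFDeriv_zero ..).trans_le
      (norm_convolution_le_of_norm_le L (hf.continuous.integrable_of_hasCompactSupport hcf) hgM x)⟩
  | succ n ih =>
    intro E F _ _ _ _ L f hcf hf
    have hfderiv : fderiv ℝ (f ⋆[L, μ] g) = fderiv ℝ f ⋆[L.precompL G, μ] g :=
      funext fun x =>
        (hcf.hasFDerivAt_convolution_left L (hf.of_le (by exact_mod_cast le_top)) hg x).fderiv
    obtain ⟨C, hC⟩ := ih (L.precompL G) (hcf.fderiv ℝ) (hf.fderiv_right le_rfl)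
    exact ⟨C, fun x => by rw [← norm_iteratedFDeriv_fderiv, hfderiv]; exact hC x⟩

end Convolution

-- `E : Type`: the codomains in `exists_bound_iteratedFDeriv_convolution_left` share the universe
-- of the domain, and here they are `ℝ`.
theorem exists_contDiff_cutoff_infDist {E : Type} [NormedAddCommGroup E] [NormedSpace ℝ E]
    [FiniteDimensional ℝ E] (s : Set E) {δ : ℝ} (hδ : 0 < δ) :
    ∃ χ : E → ℝ, ContDiff ℝ ∞ χ ∧ (∀ n : ℕ, ∃ C, ∀ x, ‖iteratedFDeriv ℝ n χ x‖ ≤ C) ∧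
      EqOn χ 1 s ∧ tsupport χ ⊆ {x | infDist x s ≤ δ} := by
  let _ : MeasurableSpace E := borel E
  have : BorelSpace E := ⟨rfl⟩
  let μ : Measure E := Measure.addHaar
  let T := {y : E | infDist y s ≤ δ / 2}
  have hT : IsClosed T := isClosed_le (continuous_infDist_pt s) continuous_const
  let g := T.indicator (1 : E → ℝ)
  have hg : LocallyIntegrable g μ := (locallyIntegrable_const 1).indicator hT.measurableSet
  have hgle : ∀ x, ‖g x‖ ≤ 1 := fun x => by
    by_cases hx : x ∈ T <;> simp [g, hx]
  let φ : ContDiffBump (0 : E) := ⟨δ / 4, δ / 2, by positivity, by linarith⟩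
  refine ⟨φ.normed μ ⋆[lsmul ℝ ℝ, μ] g, ?_, ?_, fun x hx => ?_, ?_⟩
  · exact φ.hasCompactSupport_normed.contDiff_convolution_left _ φ.contDiff_normed hg
  · exact fun n => exists_bound_iteratedFDeriv_convolution_left hg hgle n _
      φ.hasCompactSupport_normed φ.contDiff_normed
  · have hball : ball x φ.rOut ⊆ T := fun y hy => by
      have := infDist_le_infDist_add_dist (x := y) (y := x) (s := s)
      rw [infDist_zero_of_mem hx, zero_add] at this
      exact this.trans (mem_ball.1 hy).le
    have hxT : x ∈ T := hball (mem_ball_self (show 0 < δ / 2 by positivity))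
    rw [φ.normed_convolution_eq_right fun y hy => by simp [g, hball hy, hxT]]
    simp [g, hxT]
  · refine closure_minimal (fun x hx => ?_) (isClosed_le (continuous_infDist_pt s) continuous_const)
    obtain ⟨a, ha, b, hb, rfl⟩ := support_convolution_subset (lsmul ℝ ℝ) hx
    rw [φ.support_normed_eq] at ha
    have hbT : b ∈ T := support_indicator_subset hb
    calc infDist (a + b) s ≤ infDist b s + dist (a + b) b := infDist_le_infDist_add_dist
      _ ≤ δ / 2 + δ / 2 := by
          gcongr
          · exact hbT
          · simpa [dist_eq_norm] using (mem_ball_zero_iff.1 ha).le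
      _ = δ := by ring

def RapidlyDecreasingOn {E F : Type*} [NormedAddCommGroup E] [NormedSpace ℝ E]
    [NormedAddCommGroup F] [NormedSpace ℝ F] (f : E → F) (s : Set E) : Prop :=
  ∀ k n : ℕ, ∃ C, ∀ x ∈ s, ‖x‖ ^ k * ‖iteratedFDeriv ℝ n f x‖ ≤ C

theorem RapidlyDecreasingOn.mul_of_tsupport_subset {E : Type*} [NormedAddCommGroup E]
    [NormedSpace ℝ E] {s : Set E} {χ G : E → ℝ} (hG : RapidlyDecreasingOn G s)
    (hG_smooth : ContDiff ℝ ∞ G) (hχ_smooth : ContDiff ℝ ∞ χ)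
    (hχ_bdd : ∀ n : ℕ, ∃ C, ∀ x, ‖iteratedFDeriv ℝ n χ x‖ ≤ C) (hχs : tsupport χ ⊆ s) :
    RapidlyDecreasingOn (fun x => χ x * G x) univ := by
  intro k n
  choose Cχ hCχ using hχ_bdd
  choose CG hCG using hG k
  refine ⟨max 0 (∑ i ∈ Finset.range (n + 1), n.choose i * Cχ i * CG (n - i)), fun x _ => ?_⟩
  by_cases hx : x ∈ s
  · refine le_max_of_le_right ?_
    calc ‖x‖ ^ k * ‖iteratedFDeriv ℝ n (fun x => χ x * G x) x‖
        ≤ ‖x‖ ^ k * ∑ i ∈ Finset.range (n + 1),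
            n.choose i * ‖iteratedFDeriv ℝ i χ x‖ * ‖iteratedFDeriv ℝ (n - i) G x‖ := by
          gcongr
          exact norm_iteratedFDeriv_mul_le hχ_smooth hG_smooth x (by exact_mod_cast le_top)
      _ = ∑ i ∈ Finset.range (n + 1), n.choose i * ‖iteratedFDeriv ℝ i χ x‖ *
            (‖x‖ ^ k * ‖iteratedFDeriv ℝ (n - i) G x‖) := by
          rw [Finset.mul_sum]
          exact Finset.sum_congr rfl fun i _ => by ring
      _ ≤ ∑ i ∈ Finset.range (n + 1), n.choose i * Cχ i * CG (n - i) := by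
          gcongr with i
          · exact mul_nonneg (Nat.cast_nonneg _) ((norm_nonneg _).trans (hCχ i x))
          · exact hCχ i x
          · exact hCG (n - i) x hx
  · have hx_supp : x ∉ support (iteratedFDeriv ℝ n (fun x => χ x * G x)) := fun h =>
      hx (hχs (tsupport_mul_subset_left (support_iteratedFDeriv_subset n h)))
    simp [notMem_support.1 hx_supp]

/-- A function `f` on `S_d^+` is the restriction to `S_d^+` of a
Schwartz function on `S_d` (a smooth function all of whose derivatives decay faster
than any polynomial) if and only if `f` is the restriction to `S_d^+` of a smooth
function `G : S_d → ℝ` for which there exists `ε > 0` such that for all `k, n ∈ ℕ`,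
`sup {‖x‖^k · ‖DⁿG(x)‖ : x ∈ S_d, dist(x, S_d^+) ≤ ε} < ∞`. -/
theorem schwartz_restriction_characterization {d : ℕ} (f : SymMat d → ℝ) :
    (∃ F : SymMat d → ℝ, (∀ n : ℕ, ContDiff ℝ n F) ∧
      (∀ k n : ℕ, ∃ C : ℝ, ∀ x : SymMat d,
        ‖x‖ ^ k * ‖iteratedFDeriv ℝ n F x‖ ≤ C) ∧
      (∀ x ∈ psdSet d, f x = F x)) ↔
    (∃ G : SymMat d → ℝ, (∀ n : ℕ, ContDiff ℝ n G) ∧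
      (∃ ε > (0 : ℝ), ∀ k n : ℕ, ∃ C : ℝ, ∀ x : SymMat d,
        Metric.infDist x (psdSet d) ≤ ε →
        ‖x‖ ^ k * ‖iteratedFDeriv ℝ n G x‖ ≤ C) ∧
      (∀ x ∈ psdSet d, f x = G x)) := by
  constructor
  · rintro ⟨F, hF_smooth, hF_decay, hfF⟩
    exact ⟨F, hF_smooth, ⟨1, one_pos, fun k n => (hF_decay k n).imp fun C hC x _ => hC x⟩, hfF⟩
  · rintro ⟨G, hG_smooth, ⟨ε, hε, hG_decay⟩, hfG⟩
    have hG : ContDiff ℝ ∞ G := contDiff_infty.2 hG_smooth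
    obtain ⟨χ, hχ_smooth, hχ_bdd, hχ_one, hχ_supp⟩ := exists_contDiff_cutoff_infDist (psdSet d) hε
    have hχG : RapidlyDecreasingOn (fun x => χ x * G x) univ :=
      RapidlyDecreasingOn.mul_of_tsupport_subset hG_decay hG hχ_smooth hχ_bdd hχ_supp
    refine ⟨fun x => χ x * G x, contDiff_infty.1 (hχ_smooth.mul hG),
      fun k n => (hχG k n).imp fun C hC x => hC x trivial, fun x hx => ?_⟩
    simp [hfG x hx, hχ_one hx]
end
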